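/- With notation as in the flat family construction: let F̃_• be a minimal bigraded free resolution of F~/M~ over Ã = A[t], and for fixed i let B̃_{t=1} ⊆ F_i and B̃_{t=0} ⊆ G_i be the images of the differentials in the specializations F_• = F̃_• ⊗ Ã/(t−1) and G_• = F̃_• ⊗ Ã/(t). Then, with respect to the weight (ω, ε(i)) induced on F_i by the bidegrees of its basis, one has in_{(ω,ε(i))}(B̃_{t=1}) = B̃_{t=0}; i.e., the syzygies of the initial module are the initial modules of the syzygies along the minimal resolution of the homogenized module. -/

import Mathlib

set_option maxHeartbeats 1000000
set_option synthInstance.maxHeartbeats 1000000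


/-!  Basic setup: the polynomial ring `A = K[X_1,…,X_n]`, a graded free module
`F = ⊕_{j} A(-d_j)` realized as `Fin k → A`, weight orders `(ω, ε)`, initial
modules, Hilbert functions, graded free resolutions, Betti numbers,
regularity and componentwise notions, following Caviglia–Varbaro,
"Componentwise regularity (I)". -/

namespace CregPaper

abbrev A (K : Type*) [Field K] (n : ℕ) := MvPolynomial (Fin n) K

variable {K : Type*} [Field K] {n k : ℕ}

/-- `(ω)`-weight of an exponent vector `u`. -/
def wdeg (ω : Fin n → ℕ) (u : Fin n →₀ ℕ) : ℕ := u.sum fun i e => ω i * e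

/-- total (standard) degree of an exponent vector `u`. -/
def tdeg (u : Fin n →₀ ℕ) : ℕ := u.sum fun _ e => e

/-- largest `(ω,ε)`-weight of a monomial in the support of `f ∈ F`. -/
noncomputable def maxWt (ω : Fin n → ℕ) (ε : Fin k → ℕ) (f : Fin k → A K n) : ℕ :=
  Finset.univ.sup fun j => (f j).support.sup fun u => wdeg ω u + ε j

/-- the initial part `in_{(ω,ε)}(f)`: the sum of the terms of `f` of largest weight. -/
noncomputable def inForm (ω : Fin n → ℕ) (ε : Fin k → ℕ) (f : Fin k → A K n) :
    Fin k → A K n :=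
  fun j => ∑ u ∈ (f j).support.filter fun u => wdeg ω u + ε j = maxWt ω ε f,
    MvPolynomial.monomial u ((f j).coeff u)

/-- the initial module `in_{(ω,ε)}(M)`. -/
noncomputable def inMod (ω : Fin n → ℕ) (ε : Fin k → ℕ)
    (M : Submodule (A K n) (Fin k → A K n)) : Submodule (A K n) (Fin k → A K n) :=
  Submodule.span (A K n) {g | ∃ f ∈ M, f ≠ 0 ∧ g = inForm ω ε f}

/-- `f ∈ F = ⊕_j A(-d_j)` is homogeneous of (standard) degree `a`. -/
def IsHomog (d : Fin k → ℕ) (a : ℕ) (f : Fin k → A K n) : Prop :=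
  ∀ j, ∀ u ∈ (f j).support, tdeg u + d j = a

/-- the `K`-subspace of `F` of homogeneous elements of degree `a`. -/
noncomputable def homogSub (d : Fin k → ℕ) (a : ℕ) : Submodule K (Fin k → A K n) where
  carrier := {f | IsHomog d a f}
  add_mem' := by
    intro f g hf hg j u hu
    rcases Finset.mem_union.mp (MvPolynomial.support_add hu) with h | h
    · exact hf j u h
    · exact hg j u h
  zero_mem' := by intro j u hu; simp at hu
  smul_mem' := by
    intro c f hf j u hu
    exact hf j u (MvPolynomial.support_smul hu)

/-- the degree-`a` homogeneous component of `f ∈ F`. -/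
noncomputable def homogComp (d : Fin k → ℕ) (f : Fin k → A K n) (a : ℕ) : Fin k → A K n :=
  fun j => ∑ u ∈ (f j).support.filter fun u => tdeg u + d j = a,
    MvPolynomial.monomial u ((f j).coeff u)

/-- `M ⊆ F` is a graded submodule. -/
def IsGradedSub (d : Fin k → ℕ) (M : Submodule (A K n) (Fin k → A K n)) : Prop :=
  ∀ f ∈ M, ∀ a, homogComp d f a ∈ M

/-- Hilbert function of `M ⊆ F` in degree `a`. -/
noncomputable def hilb (d : Fin k → ℕ) (M : Submodule (A K n) (Fin k → A K n)) (a : ℕ) : ℕ :=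
  Module.finrank K ↥(Submodule.restrictScalars K M ⊓ homogSub d a)

/-- the homogeneous maximal ideal `m = (X_1,…,X_n)` of `A`. -/
noncomputable def mIdeal (K : Type*) [Field K] (n : ℕ) : Ideal (A K n) :=
  RingHom.ker (MvPolynomial.constantCoeff : A K n →+* K)

/-- graded Betti number `β_{0,a}(M) = dim_K (M/mM)_a`, the number of minimal
generators of the graded module `M` in degree `a`. -/
noncomputable def beta0 (d : Fin k → ℕ) (M : Submodule (A K n) (Fin k → A K n)) (a : ℕ) : ℕ :=
  hilb d M a - hilb d (mIdeal K n • M) a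

/-- A graded free resolution of a graded submodule `M` of `F = ⊕_j A(-d_j)`:
`⋯ → A^{rk 1} → A^{rk 0} → M → 0`, each free module coming with degree shifts
`sh i`, all maps graded of degree `0`. -/
structure GFRes (d : Fin k → ℕ) (M : Submodule (A K n) (Fin k → A K n)) where
  rk : ℕ → ℕ
  sh : (i : ℕ) → Fin (rk i) → ℕ
  aug : (Fin (rk 0) → A K n) →ₗ[A K n] (Fin k → A K n)
  diff : (i : ℕ) → ((Fin (rk (i+1)) → A K n) →ₗ[A K n] (Fin (rk i) → A K n))
  aug_range : LinearMap.range aug = M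
  aug_hom : ∀ l, IsHomog d (sh 0 l) (aug (Pi.single l 1))
  diff_hom : ∀ i l, IsHomog (sh i) (sh (i+1) l) (diff i (Pi.single l 1))
  ex0 : LinearMap.range (diff 0) = LinearMap.ker aug
  exs : ∀ i, LinearMap.range (diff (i+1)) = LinearMap.ker (diff i)

/-- minimality of a graded free resolution: all entries of the differential
matrices lie in the maximal ideal. -/
def GFRes.Minimal {d : Fin k → ℕ} {M : Submodule (A K n) (Fin k → A K n)}
    (res : GFRes d M) : Prop :=
  ∀ i x l, res.diff i x l ∈ mIdeal K n

/-- the graded Betti number `β_{i,j}(M)` read off from a (minimal) resolution. -/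
noncomputable def GFRes.betti {d : Fin k → ℕ} {M : Submodule (A K n) (Fin k → A K n)}
    (res : GFRes d M) (i j : ℕ) : ℕ :=
  (Finset.univ.filter fun l => res.sh i l = j).card

/-- `reg_A(M) ≤ r`: there is a minimal graded free resolution of `M` with
all shifts in homological degree `i` bounded by `i + r`. -/
def RegLE (d : Fin k → ℕ) (M : Submodule (A K n) (Fin k → A K n)) (r : ℕ) : Prop :=
  ∃ res : GFRes d M, res.Minimal ∧ ∀ i l, res.sh i l ≤ i + r

/-- `M_{⟨a⟩}`: the submodule generated by the homogeneous elements of degree `a` of `M`. -/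
noncomputable def compSub (d : Fin k → ℕ) (M : Submodule (A K n) (Fin k → A K n)) (a : ℕ) :
    Submodule (A K n) (Fin k → A K n) :=
  Submodule.span (A K n) {f | f ∈ M ∧ IsHomog d a f}

/-- `M` is `r`-componentwise regular: `reg (M_{⟨a⟩}) ≤ a + r` for all `a`. -/
def CWRegLE (d : Fin k → ℕ) (M : Submodule (A K n) (Fin k → A K n)) (r : ℕ) : Prop :=
  ∀ a, RegLE d (compSub d M a) (a + r)

/-- `M` is componentwise linear: each `M_{⟨a⟩}` is zero or has regularity `a`. -/
def CompLinear (d : Fin k → ℕ) (M : Submodule (A K n) (Fin k → A K n)) : Prop :=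
  ∀ a, compSub d M a = ⊥ ∨ RegLE d (compSub d M a) a

/-- `M` is generated in degrees `≤ a`. -/
def GenInDegLE (d : Fin k → ℕ) (M : Submodule (A K n) (Fin k → A K n)) (a : ℕ) : Prop :=
  M ≤ Submodule.span (A K n) {f | f ∈ M ∧ ∃ b ≤ a, IsHomog d b f}

end CregPaper
/-!  The flat family: `Ã = A[t]` with `deg X_i = (1, w_i)`, `deg t = (0,1)`,
homogenization of elements and modules with respect to `(ω,ε)`, saturation
with respect to `t`, and specializations `t = α`. -/

namespace CregPaper

variable {K : Type*} [Field K] {n k : ℕ}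

abbrev At (K : Type*) [Field K] (n : ℕ) := Polynomial (A K n)

/-- the `(ω,ε)`-homogenization `f̃ ∈ F̃` of `f ∈ F`. -/
noncomputable def homogenize (ω : Fin n → ℕ) (ε : Fin k → ℕ) (f : Fin k → A K n) :
    Fin k → At K n :=
  fun j => ∑ u ∈ (f j).support,
    Polynomial.monomial (maxWt ω ε f - (wdeg ω u + ε j))
      (MvPolynomial.monomial u ((f j).coeff u))

/-- the homogenization `M̃ ⊆ F̃` of a submodule `M ⊆ F`. -/
noncomputable def Mtilde (ω : Fin n → ℕ) (ε : Fin k → ℕ)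
    (M : Submodule (A K n) (Fin k → A K n)) : Submodule (At K n) (Fin k → At K n) :=
  Submodule.span (At K n) {g | ∃ f ∈ M, g = homogenize ω ε f}

/-- saturation `N : t^∞` of a submodule `N ⊆ F̃`. -/
noncomputable def tsat (N : Submodule (At K n) (Fin k → At K n)) :
    Submodule (At K n) (Fin k → At K n) where
  carrier := {x | ∃ e : ℕ, ((Polynomial.X : At K n) ^ e) • x ∈ N}
  add_mem' := by
    rintro x y ⟨e, he⟩ ⟨e', he'⟩
    refine ⟨e + e', ?_⟩
    rw [smul_add]
    refine Submodule.add_mem _ ?_ ?_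
    · rw [pow_add, mul_comm, mul_smul]; exact Submodule.smul_mem _ _ he
    · rw [pow_add, mul_smul]; exact Submodule.smul_mem _ _ he'
  zero_mem' := ⟨0, by simp⟩
  smul_mem' := by
    rintro c x ⟨e, he⟩
    exact ⟨e, by rw [smul_comm]; exact Submodule.smul_mem _ _ he⟩

/-- image in `F` of a submodule `N ⊆ F̃` under the evaluation `t ↦ α`. -/
noncomputable def evalSub (α : K) (N : Submodule (At K n) (Fin k → At K n)) :
    Submodule (A K n) (Fin k → A K n) :=
  Submodule.span (A K n)
    ((fun g : Fin k → At K n => fun j => Polynomial.eval (algebraMap K (A K n) α) (g j)) '' N)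

/-- the linear map `R^r → M` sending the standard basis to `v`. -/
noncomputable def combo {R : Type*} [CommRing R] {M : Type*} [AddCommGroup M] [Module R M]
    {r : ℕ} (v : Fin r → M) : (Fin r → R) →ₗ[R] M where
  toFun x := ∑ i, x i • v i
  map_add' x y := by simp [add_smul, Finset.sum_add_distrib]
  map_smul' c x := by simp [mul_smul, Finset.smul_sum]

end CregPaper

namespace CregPaper

variable {K : Type*} [Field K] {n k : ℕ}

/-- `g ∈ ⊕_v Ã(-a_v, -e_v)` is bihomogeneous of bidegree `(p,q)` for the
bigrading `deg X_i = (1, ω_i)`, `deg t = (0,1)`. -/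
def IsBihom {k' : ℕ} (ω : Fin n → ℕ) (av ev : Fin k' → ℕ) (p q : ℕ)
    (g : Fin k' → At K n) : Prop :=
  ∀ v, ∀ s ∈ (g v).support, ∀ u ∈ ((g v).coeff s).support,
    tdeg u + av v = p ∧ s + wdeg ω u + ev v = q

/-- A minimal bigraded free resolution `F̃_• → F̃/M̃ → 0` of `F̃/M̃` over
`Ã = A[t]`.  The augmentation is recorded as a lift `F̃_0 → F̃`, so that the
resolution of the quotient is encoded by `range aug ⊔ M̃ = ⊤` and
`range (diff 0) = aug⁻¹(M̃)`.  The basis element `l` of `F̃_i` has bidegree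
`(adeg i l, edeg i l)`; in particular `edeg i` is the weight `ε(i)`. -/
structure BigradedRes (ω : Fin n → ℕ) (d ε : Fin k → ℕ)
    (Mt : Submodule (At K n) (Fin k → At K n)) where
  rk : ℕ → ℕ
  adeg : (i : ℕ) → Fin (rk i) → ℕ
  edeg : (i : ℕ) → Fin (rk i) → ℕ
  aug : (Fin (rk 0) → At K n) →ₗ[At K n] (Fin k → At K n)
  diff : (i : ℕ) → ((Fin (rk (i+1)) → At K n) →ₗ[At K n] (Fin (rk i) → At K n))
  aug_hom : ∀ l, IsBihom ω d ε (adeg 0 l) (edeg 0 l) (aug (Pi.single l 1))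
  diff_hom : ∀ i l,
    IsBihom ω (adeg i) (edeg i) (adeg (i+1) l) (edeg (i+1) l) (diff i (Pi.single l 1))
  surj : LinearMap.range aug ⊔ Mt = ⊤
  ex0 : LinearMap.range (diff 0) = Submodule.comap aug Mt
  exs : ∀ i, LinearMap.range (diff (i+1)) = LinearMap.ker (diff i)
  minimal : ∀ i x l, Polynomial.coeff (diff i x l) 0 ∈ mIdeal K n


section Auxiliary

noncomputable def Phi (ω : Fin n → ℕ) : At K n →+* Polynomial (At K n) :=
  Polynomial.eval₂RingHom
    (MvPolynomial.eval₂Hom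
      (Polynomial.C.comp (Polynomial.C.comp MvPolynomial.C))
      (fun i => Polynomial.C (Polynomial.C (MvPolynomial.X i)) * Polynomial.X ^ ω i))
    (Polynomial.C Polynomial.X * Polynomial.X)

lemma Phi_monomial (ω : Fin n → ℕ) (s : ℕ) (u : Fin n →₀ ℕ) (c : K) :
    Phi ω (Polynomial.monomial s (MvPolynomial.monomial u c)) =
      Polynomial.C (Polynomial.monomial s (MvPolynomial.monomial u c)) *
        Polynomial.X ^ (s + wdeg ω u) := by
  have h1 : (Polynomial.monomial s (MvPolynomial.monomial u c) : At K n)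
      = Polynomial.C (MvPolynomial.monomial u c) * Polynomial.X ^ s :=
    (Polynomial.C_mul_X_pow_eq_monomial).symm
  rw [h1, map_mul, map_pow]
  have hX : Phi ω (Polynomial.X : At K n) = Polynomial.C Polynomial.X * Polynomial.X := by
    simp [Phi]
  have hC : Phi ω (Polynomial.C (MvPolynomial.monomial u c) : At K n)
      = Polynomial.C (Polynomial.C (MvPolynomial.monomial u c)) *
          Polynomial.X ^ (wdeg ω u) := by
    simp only [Phi, Polynomial.coe_eval₂RingHom, Polynomial.eval₂_C]
    rw [MvPolynomial.eval₂Hom_monomial]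
    have : (u.prod fun i e =>
        (Polynomial.C (Polynomial.C (MvPolynomial.X i)) * Polynomial.X ^ ω i) ^ e :
          Polynomial (At K n))
        = Polynomial.C (Polynomial.C (u.prod fun i e => MvPolynomial.X i ^ e)) *
            Polynomial.X ^ wdeg ω u := by
      rw [Finsupp.prod, Finsupp.prod]
      calc (∏ i ∈ u.support,
            ((Polynomial.C (Polynomial.C (MvPolynomial.X i)) * Polynomial.X ^ ω i) ^ u i :
              Polynomial (At K n)))
          = ∏ i ∈ u.support,
            (Polynomial.C (Polynomial.C (MvPolynomial.X i ^ u i)) * Polynomial.X ^ (ω i * u i)) := by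
            refine Finset.prod_congr rfl fun i _ => ?_
            rw [mul_pow (M := Polynomial (At K n)), ← pow_mul, map_pow, map_pow]
        _ = Polynomial.C (Polynomial.C (∏ i ∈ u.support, MvPolynomial.X i ^ u i)) *
              Polynomial.X ^ (∑ i ∈ u.support, ω i * u i) := by
            rw [Finset.prod_mul_distrib, ← Finset.prod_pow_eq_pow_sum (M := Polynomial (At K n)), map_prod, map_prod]
        _ = _ := by rw [wdeg, Finsupp.sum]
    rw [this]
    rw [MvPolynomial.monomial_eq]
    simp only [RingHom.comp_apply, map_mul]
    ring
  rw [hX, hC, mul_pow (M := Polynomial (At K n)), pow_add, ← Polynomial.C_pow, Polynomial.C_mul]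
  ring


lemma bimono_induction (P : At K n → Prop)
    (hadd : ∀ p q, P p → P q → P (p + q)) (h0 : P 0)
    (hmono : ∀ s u c, P (Polynomial.monomial s (MvPolynomial.monomial u c))) :
    ∀ p, P p := by
  intro p
  induction p using Polynomial.induction_on' with
  | add p q hp hq => exact hadd _ _ hp hq
  | monomial s a =>
    induction a using MvPolynomial.induction_on' with
    | monomial u c => exact hmono s u c
    | add p q hp hq => rw [map_add]; exact hadd _ _ hp hq

lemma evalT1_Phi (ω : Fin n → ℕ) : ∀ p : At K n, Polynomial.eval (1 : At K n) (Phi ω p) = p := by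
  refine bimono_induction _ (fun p q hp hq => ?_) (by simp) (fun s u c => ?_)
  · rw [RingHom.map_add, Polynomial.eval_add, hp, hq]
  · rw [Phi_monomial]; simp

lemma recon (ω : Fin n → ℕ) (a s : ℕ) (u : Fin n →₀ ℕ) :
    ∀ (p : At K n) (q : ℕ),
      MvPolynomial.coeff u (Polynomial.coeff
          (Polynomial.coeff (Polynomial.X ^ a * Phi ω p) q) s)
        = if q = s + wdeg ω u + a then MvPolynomial.coeff u (Polynomial.coeff p s) else 0 := by
  refine bimono_induction _ (fun p p' hp hp' => fun q => ?_) (fun q => by simp) (fun s' u' c => fun q => ?_)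
  · rw [RingHom.map_add, mul_add, Polynomial.coeff_add, Polynomial.coeff_add,
      MvPolynomial.coeff_add, hp, hp', Polynomial.coeff_add, MvPolynomial.coeff_add]
    split_ifs <;> simp
  · have h2 : (Polynomial.X ^ a * Phi ω (Polynomial.monomial s' (MvPolynomial.monomial u' c)) :
        Polynomial (At K n))
        = Polynomial.C (Polynomial.monomial s' (MvPolynomial.monomial u' c)) *
            Polynomial.X ^ (a + (s' + wdeg ω u')) := by
      rw [Phi_monomial, pow_add]; ring
    rw [h2, Polynomial.coeff_C_mul, Polynomial.coeff_X_pow, mul_ite, mul_one, mul_zero]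
    simp only [Polynomial.coeff_monomial, MvPolynomial.coeff_monomial,
      apply_ite (fun x : At K n => Polynomial.coeff x s),
      apply_ite (fun x : A K n => MvPolynomial.coeff u x),
      Polynomial.coeff_zero, MvPolynomial.coeff_zero]
    split_ifs <;> first | rfl | (exfalso; subst_vars; omega)


lemma Phi_X (ω : Fin n → ℕ) :
    Phi ω (Polynomial.X : At K n) = Polynomial.C Polynomial.X * Polynomial.X := by
  simp [Phi]

def IsWH (ω : Fin n → ℕ) {r : ℕ} (e : Fin r → ℕ) (Q : ℕ) (g : Fin r → At K n) : Prop :=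
  ∀ v, Polynomial.X ^ (e v) * Phi ω (g v) = Polynomial.monomial Q (g v)

noncomputable def wcomp (ω : Fin n → ℕ) {r : ℕ} (e : Fin r → ℕ) (q : ℕ)
    (g : Fin r → At K n) : Fin r → At K n :=
  fun v => (Polynomial.X ^ (e v) * Phi ω (g v)).coeff q

variable {ω : Fin n → ℕ} {r : ℕ} {e : Fin r → ℕ}

lemma isWH_single (a Q : ℕ) (p : At K n)
    (h : ∀ s u, MvPolynomial.coeff u (Polynomial.coeff p s) ≠ 0 → s + wdeg ω u + a = Q) :
    Polynomial.X ^ a * Phi ω p = Polynomial.monomial Q p := by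
  have hp : p = ∑ s ∈ p.support, ∑ u ∈ (p.coeff s).support,
      Polynomial.monomial s (MvPolynomial.monomial u (MvPolynomial.coeff u (p.coeff s))) := by
    conv_lhs => rw [Polynomial.as_sum_support p]
    refine Finset.sum_congr rfl fun s hs => ?_
    rw [← map_sum]
    congr 1
    exact (MvPolynomial.support_sum_monomial_coeff (p.coeff s)).symm
  conv_lhs => rw [hp]
  conv_rhs => rw [hp]
  rw [map_sum, Finset.mul_sum, map_sum]
  refine Finset.sum_congr rfl fun s hs => ?_
  rw [map_sum, Finset.mul_sum, map_sum]
  refine Finset.sum_congr rfl fun u hu => ?_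
  have hc : MvPolynomial.coeff u (Polynomial.coeff p s) ≠ 0 := MvPolynomial.mem_support_iff.mp hu
  have hQ : s + wdeg ω u + a = Q := h s u hc
  rw [Phi_monomial, ← hQ]
  generalize (Polynomial.monomial s
    (MvPolynomial.monomial u (MvPolynomial.coeff u (Polynomial.coeff p s))) : At K n) = m
  rw [← Polynomial.C_mul_X_pow_eq_monomial, pow_add, pow_add]
  ring

lemma isWH_of_coeff {Q : ℕ} {g : Fin r → At K n}
    (h : ∀ v s u, MvPolynomial.coeff u (Polynomial.coeff (g v) s) ≠ 0 →
      s + wdeg ω u + e v = Q) : IsWH ω e Q g :=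
  fun v => isWH_single (e v) Q (g v) (h v)

lemma isWH_coeff {Q : ℕ} {g : Fin r → At K n} (h : IsWH ω e Q g) :
    ∀ v s u, MvPolynomial.coeff u (Polynomial.coeff (g v) s) ≠ 0 →
      s + wdeg ω u + e v = Q := by
  intro v s u hc
  by_contra hne
  have := recon ω (e v) s u (g v) Q
  rw [h v, Polynomial.coeff_monomial, if_pos rfl, if_neg (fun hh => hne hh.symm)] at this
  exact hc this

lemma isWH_zero {Q : ℕ} : IsWH ω e Q (0 : Fin r → At K n) := by
  intro v; simp

lemma wcomp_zero (q : ℕ) : wcomp ω e q (0 : Fin r → At K n) = 0 := by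
  funext v; simp [wcomp]

lemma wcomp_add (q : ℕ) (g h : Fin r → At K n) :
    wcomp ω e q (g + h) = wcomp ω e q g + wcomp ω e q h := by
  funext v
  simp only [wcomp, Pi.add_apply, RingHom.map_add, mul_add, Polynomial.coeff_add]

lemma wcomp_sum (q : ℕ) {ι : Type*} (S : Finset ι) (G : ι → Fin r → At K n) :
    wcomp ω e q (∑ i ∈ S, G i) = ∑ i ∈ S, wcomp ω e q (G i) := by
  classical
  induction S using Finset.induction_on with
  | empty => simp [wcomp_zero]
  | insert a S' hni ih =>
                     rw [Finset.sum_insert hni, Finset.sum_insert hni, wcomp_add, ih]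

lemma wcomp_isWH (q : ℕ) (g : Fin r → At K n) : IsWH ω e q (wcomp ω e q g) := by
  refine isWH_of_coeff fun v s u hc => ?_
  by_contra hne
  rw [wcomp, recon ω (e v) s u (g v) q, if_neg (fun hh => hne hh.symm)] at hc
  exact hc rfl

lemma wcomp_smul_WH {Q : ℕ} {G : Fin r → At K n} (hG : IsWH ω e Q G) (q : ℕ) (p : At K n) :
    wcomp ω e q (p • G) = if Q ≤ q then ((Phi ω p).coeff (q - Q)) • G else 0 := by
  funext v
  have h1 : (Polynomial.X ^ (e v) * Phi ω ((p • G) v) : Polynomial (At K n))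
      = Phi ω p * Polynomial.monomial Q (G v) := by
    rw [Pi.smul_apply, smul_eq_mul, RingHom.map_mul, ← hG v]; ring
  rw [wcomp, h1]
  by_cases hq : Q ≤ q
  · rw [if_pos hq, ← Nat.sub_add_cancel hq, Polynomial.coeff_mul_monomial]
    simp [Pi.smul_apply, smul_eq_mul]
  · rw [if_neg hq, ← Polynomial.C_mul_X_pow_eq_monomial, ← mul_assoc,
      Polynomial.coeff_mul_X_pow', if_neg hq]
    simp

lemma wcomp_decomp {B : ℕ} {g : Fin r → At K n}
    (h : ∀ v, (Polynomial.X ^ (e v) * Phi ω (g v)).natDegree < B) :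
    ∑ q ∈ Finset.range B, wcomp ω e q g = g := by
  funext v
  rw [Finset.sum_apply]
  have := Polynomial.eval_eq_sum_range' (h v) (1 : At K n)
  simp only [one_pow, mul_one] at this
  simp only [wcomp]
  rw [← this, Polynomial.eval_mul, Polynomial.eval_pow, Polynomial.eval_X, one_pow, one_mul,
    evalT1_Phi]

lemma wcomp_tpow (q c : ℕ) (x : Fin r → At K n) :
    wcomp ω e (q + c) ((Polynomial.X ^ c : At K n) • x)
      = (Polynomial.X ^ c : At K n) • wcomp ω e q x := by
  funext v
  have h1 : (Polynomial.X ^ (e v) * Phi ω (((Polynomial.X ^ c : At K n) • x) v) :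
      Polynomial (At K n))
      = Polynomial.C (Polynomial.X ^ c) *
          (Polynomial.X ^ c * (Polynomial.X ^ (e v) * Phi ω (x v))) := by
    rw [Pi.smul_apply, smul_eq_mul, RingHom.map_mul, RingHom.map_pow, Phi_X, mul_pow (M := Polynomial (At K n)),
      ← Polynomial.C_pow]
    ring
  rw [wcomp, h1, Polynomial.coeff_C_mul, Polynomial.coeff_X_pow_mul]
  simp [wcomp, Pi.smul_apply, smul_eq_mul]

lemma isWH_tpow {Q : ℕ} {y : Fin r → At K n} (h : IsWH ω e Q y) (c : ℕ) :
    IsWH ω e (Q + c) ((Polynomial.X ^ c : At K n) • y) := by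
  intro v
  have h1 : (Polynomial.X ^ (e v) * Phi ω (((Polynomial.X ^ c : At K n) • y) v) :
      Polynomial (At K n))
      = Polynomial.C (Polynomial.X ^ c) * (Polynomial.X ^ c * (Polynomial.X ^ (e v) * Phi ω (y v))) := by
    rw [Pi.smul_apply, smul_eq_mul, RingHom.map_mul, RingHom.map_pow, Phi_X, mul_pow (M := Polynomial (At K n)),
      ← Polynomial.C_pow]
    ring
  rw [h1, h v, ← Polynomial.C_mul_X_pow_eq_monomial, ← Polynomial.C_mul_X_pow_eq_monomial]
  simp only [Pi.smul_apply, smul_eq_mul, Polynomial.C_mul]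
  rw [pow_add]
  ring

lemma isWH_add {Q : ℕ} {y z : Fin r → At K n} (hy : IsWH ω e Q y) (hz : IsWH ω e Q z) :
    IsWH ω e Q (y + z) := by
  intro v
  rw [Pi.add_apply, RingHom.map_add, mul_add, hy v, hz v, ← map_add]


noncomputable def ev (α : K) {r : ℕ} (g : Fin r → At K n) : Fin r → A K n :=
  fun j => Polynomial.eval (algebraMap K (A K n) α) (g j)


lemma wt_le {f : Fin r → A K n} {v : Fin r} {u : Fin n →₀ ℕ} (hu : u ∈ (f v).support) :
    wdeg ω u + e v ≤ maxWt ω e f :=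
  le_trans (Finset.le_sup (f := fun u => wdeg ω u + e v) hu)
    (Finset.le_sup (f := fun j => (f j).support.sup fun u => wdeg ω u + e j)
      (Finset.mem_univ v))

lemma maxWt_le {f : Fin r → A K n} {Q : ℕ}
    (h : ∀ v u, u ∈ (f v).support → wdeg ω u + e v ≤ Q) : maxWt ω e f ≤ Q :=
  Finset.sup_le fun v _ => Finset.sup_le fun u hu => h v u hu

lemma homogenize_isWH (f : Fin r → A K n) : IsWH ω e (maxWt ω e f) (homogenize ω e f) := by
  intro v
  simp only [homogenize]
  rw [map_sum, Finset.mul_sum, map_sum]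
  refine Finset.sum_congr rfl fun u hu => ?_
  have hle : wdeg ω u + e v ≤ maxWt ω e f := wt_le hu
  rw [Phi_monomial]
  generalize hm : (Polynomial.monomial (maxWt ω e f - (wdeg ω u + e v))
      (MvPolynomial.monomial u (MvPolynomial.coeff u (f v))) : At K n) = m
  rw [← Polynomial.C_mul_X_pow_eq_monomial]
  obtain ⟨W, hWe⟩ : ∃ W, maxWt ω e f = W := ⟨_, rfl⟩
  rw [hWe] at hle ⊢
  obtain ⟨a, hae⟩ : ∃ a, W - (wdeg ω u + e v) = a := ⟨_, rfl⟩
  rw [hae]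
  have hW2 : W = e v + (a + wdeg ω u) := by omega
  rw [hW2, pow_add, pow_add]
  ring

lemma ev_one_homogenize (f : Fin r → A K n) : ev (1 : K) (homogenize ω e f) = f := by
  funext v
  simp only [ev, homogenize, map_one, Polynomial.eval_finset_sum, Polynomial.eval_monomial,
    one_pow, mul_one]
  exact MvPolynomial.support_sum_monomial_coeff (f v)

lemma ev_zero_homogenize (f : Fin r → A K n) : ev (0 : K) (homogenize ω e f) = inForm ω e f := by
  funext v
  simp only [ev, homogenize, map_zero, Polynomial.eval_finset_sum, Polynomial.eval_monomial,
    zero_pow_eq, mul_ite, mul_one, mul_zero]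
  rw [inForm, Finset.sum_filter]
  refine Finset.sum_congr rfl fun u hu => ?_
  have hle : wdeg ω u + e v ≤ maxWt ω e f := wt_le hu
  refine if_congr ?_ rfl rfl
  omega

lemma ev_one_coeff (g : Fin r → At K n) (v : Fin r) (u : Fin n →₀ ℕ) :
    MvPolynomial.coeff u (ev (1 : K) g v)
      = ∑ s ∈ (g v).support, MvPolynomial.coeff u (Polynomial.coeff (g v) s) := by
  simp only [ev, map_one, Polynomial.eval_eq_sum, Polynomial.sum, one_pow, mul_one]
  rw [MvPolynomial.coeff_sum]

lemma isWH_coeff_eval {Q : ℕ} {g : Fin r → At K n} (h : IsWH ω e Q g)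
    (v : Fin r) (s : ℕ) (u : Fin n →₀ ℕ) :
    MvPolynomial.coeff u (Polynomial.coeff (g v) s)
      = if s + wdeg ω u + e v = Q then MvPolynomial.coeff u (ev (1 : K) g v) else 0 := by
  by_cases hc : s + wdeg ω u + e v = Q
  · rw [if_pos hc, ev_one_coeff]
    by_cases hs : s ∈ (g v).support
    · rw [Finset.sum_eq_single_of_mem s hs]
      intro b _ hb
      by_contra hb0
      have := isWH_coeff h v b u hb0
      omega
    · rw [Polynomial.notMem_support_iff.mp hs, MvPolynomial.coeff_zero]
      symm
      refine Finset.sum_eq_zero fun b hb => ?_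
      by_contra hb0
      have := isWH_coeff h v b u hb0
      have hbs : b = s := by omega
      exact hs (hbs ▸ hb)
  · rw [if_neg hc]
    by_contra hb0
    exact hc (isWH_coeff h v s u hb0)

lemma isWH_maxWt_le {Q : ℕ} {g : Fin r → At K n} (h : IsWH ω e Q g) :
    maxWt ω e (ev (1 : K) g) ≤ Q := by
  refine maxWt_le fun v u hu => ?_
  by_contra hgt
  have h0 : MvPolynomial.coeff u (ev (1 : K) g v) ≠ 0 := MvPolynomial.mem_support_iff.mp hu
  rw [ev_one_coeff] at h0
  refine h0 (Finset.sum_eq_zero fun s _ => ?_)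
  rw [isWH_coeff_eval h v s u, if_neg (by omega)]

lemma isWH_eval_zero {Q : ℕ} {g : Fin r → At K n} (h : IsWH ω e Q g)
    (h0 : ev (1 : K) g = 0) : g = 0 := by
  funext v
  apply Polynomial.ext; intro s
  apply MvPolynomial.ext; intro u
  rw [isWH_coeff_eval h v s u, h0]
  simp

lemma homogenize_coeff (f : Fin r → A K n) (v : Fin r) (s : ℕ) (u : Fin n →₀ ℕ) :
    MvPolynomial.coeff u (Polynomial.coeff (homogenize ω e f v) s)
      = if maxWt ω e f - (wdeg ω u + e v) = s then MvPolynomial.coeff u (f v) else 0 := by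
  simp only [homogenize, Polynomial.finset_sum_coeff, Polynomial.coeff_monomial,
    MvPolynomial.coeff_sum, apply_ite (fun x : A K n => MvPolynomial.coeff u x),
    MvPolynomial.coeff_monomial, MvPolynomial.coeff_zero]
  by_cases hu : u ∈ (f v).support
  · rw [Finset.sum_eq_single_of_mem u hu (fun b _ hb => by rw [if_neg hb, ite_self]),
      if_pos rfl]
  · rw [MvPolynomial.notMem_support_iff.mp hu, ite_self]
    refine Finset.sum_eq_zero fun b hb => ?_
    have hbu : b ≠ u := fun hh => hu (hh ▸ hb)
    rw [if_neg hbu, ite_self]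

lemma isWH_eq_homogenize {Q : ℕ} {g : Fin r → At K n} (h : IsWH ω e Q g) :
    g = (Polynomial.X ^ (Q - maxWt ω e (ev (1 : K) g)) : At K n) •
      homogenize ω e (ev (1 : K) g) := by
  set f := ev (1 : K) g with hf
  set W := maxWt ω e f with hW
  have hWQ : W ≤ Q := isWH_maxWt_le h
  funext v
  apply Polynomial.ext; intro s
  apply MvPolynomial.ext; intro u
  rw [isWH_coeff_eval h v s u]
  have hsmul : ((Polynomial.X ^ (Q - W) : At K n) • homogenize ω e f) v
      = homogenize ω e f v * Polynomial.X ^ (Q - W) := by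
    rw [Pi.smul_apply, smul_eq_mul, mul_comm]
  rw [hsmul, Polynomial.coeff_mul_X_pow']
  by_cases h1 : Q - W ≤ s
  · rw [if_pos h1, homogenize_coeff]
    by_cases hF : MvPolynomial.coeff u (f v) = 0
    · rw [hF]; simp
    · have hsupp : u ∈ (f v).support := MvPolynomial.mem_support_iff.mpr hF
      have hle : wdeg ω u + e v ≤ W := wt_le hsupp
      by_cases hc : s + wdeg ω u + e v = Q
      · rw [if_pos hc, if_pos (by omega)]
      · rw [if_neg hc, if_neg (by omega)]
  · rw [if_neg h1]
    by_cases hc : s + wdeg ω u + e v = Q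
    · -- then s ≥ Q - W would follow if wdeg+e ≤ W; otherwise coeff is 0
      by_cases hle : wdeg ω u + e v ≤ W
      · omega
      · rw [if_pos hc]
        by_contra hF
        exact hle (wt_le (MvPolynomial.mem_support_iff.mpr fun hh => hF (hh ▸ rfl)))
    · rw [if_neg hc, MvPolynomial.coeff_zero]


lemma ev_zero_elt (α : K) : ev α (0 : Fin r → At K n) = 0 := by
  funext v; simp [ev]

lemma ev_add (α : K) (g h : Fin r → At K n) : ev α (g + h) = ev α g + ev α h := by
  funext v; simp [ev]

lemma ev_sum (α : K) {ι : Type*} (S : Finset ι) (G : ι → Fin r → At K n) :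
    ev α (∑ i ∈ S, G i) = ∑ i ∈ S, ev α (G i) := by
  classical
  induction S using Finset.induction_on with
  | empty => simp [ev_zero_elt]
  | insert a S' hni ih =>
                     rw [Finset.sum_insert hni, Finset.sum_insert hni, ev_add, ih]

lemma ev_smul (α : K) (p : At K n) (g : Fin r → At K n) :
    ev α (p • g) = Polynomial.eval (algebraMap K (A K n) α) p • ev α g := by
  funext v
  simp [ev, Pi.smul_apply, smul_eq_mul]

lemma ev_one_tpow (c : ℕ) (y : Fin r → At K n) :
    ev (1 : K) ((Polynomial.X ^ c : At K n) • y) = ev (1 : K) y := by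
  funext v
  simp [ev, Pi.smul_apply, smul_eq_mul]

lemma ev_zero_tpow {c : ℕ} (hc : 0 < c) (y : Fin r → At K n) :
    ev (0 : K) ((Polynomial.X ^ c : At K n) • y) = 0 := by
  funext v
  have h0 : (algebraMap K (A K n)) 0 = 0 := map_zero _
  simp [ev, Pi.smul_apply, smul_eq_mul, h0, zero_pow hc.ne']

lemma mem_evalSub {α : K} {N : Submodule (At K n) (Fin r → At K n)} {x : Fin r → A K n} :
    x ∈ evalSub α N ↔ ∃ g ∈ N, ev α g = x := by
  constructor
  · intro hx
    refine Submodule.span_induction ?_ ?_ ?_ ?_ hx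
    · rintro y ⟨g, hg, rfl⟩
      exact ⟨g, hg, rfl⟩
    · exact ⟨0, Submodule.zero_mem _, ev_zero_elt α⟩
    · rintro y z - - ⟨g, hg, rfl⟩ ⟨g', hg', rfl⟩
      exact ⟨g + g', Submodule.add_mem _ hg hg', ev_add α g g'⟩
    · rintro a y - ⟨g, hg, rfl⟩
      refine ⟨Polynomial.C a • g, Submodule.smul_mem _ _ hg, ?_⟩
      rw [ev_smul, Polynomial.eval_C]
  · rintro ⟨g, hg, rfl⟩
    exact Submodule.subset_span ⟨g, hg, rfl⟩

lemma ev_mem_evalSub {α : K} {N : Submodule (At K n) (Fin r → At K n)} {g : Fin r → At K n}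
    (hg : g ∈ N) : ev α g ∈ evalSub α N :=
  mem_evalSub.mpr ⟨g, hg, rfl⟩

lemma wcomp_mem_span {S : Set (Fin r → At K n)} (hS : ∀ y ∈ S, ∃ Q, IsWH ω e Q y)
    {x : Fin r → At K n} (hx : x ∈ Submodule.span (At K n) S) (q : ℕ) :
    wcomp ω e q x ∈ Submodule.span (At K n) S := by
  obtain ⟨m, c, s, rfl⟩ := Submodule.mem_span_set'.mp hx
  rw [wcomp_sum]
  refine Submodule.sum_mem _ fun i _ => ?_
  obtain ⟨Q, hQ⟩ := hS (s i) (s i).2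
  rw [wcomp_smul_WH hQ]
  split_ifs
  · exact Submodule.smul_mem _ _ (Submodule.subset_span (s i).2)
  · exact Submodule.zero_mem _

lemma range_eq_span {r' : ℕ} (L : (Fin r' → At K n) →ₗ[At K n] (Fin r → At K n)) :
    LinearMap.range L
      = Submodule.span (At K n) (Set.range fun l => L (Pi.single l 1)) := by
  refine le_antisymm ?_ (Submodule.span_le.mpr ?_)
  · rintro _ ⟨y, rfl⟩
    have hy : y = ∑ l, (y l) • (Pi.single l (1 : At K n) : Fin r' → At K n) := by
      funext v
      rw [Finset.sum_apply]
      simp [Pi.single_apply]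
    rw [hy, map_sum]
    refine Submodule.sum_mem _ fun l _ => ?_
    rw [LinearMap.map_smul]
    exact Submodule.smul_mem _ _ (Submodule.subset_span ⟨l, rfl⟩)
  · rintro _ ⟨l, rfl⟩
    exact ⟨Pi.single l 1, rfl⟩

lemma isWH_sum {Q : ℕ} {ι : Type*} (S : Finset ι) (G : ι → Fin r → At K n)
    (h : ∀ i ∈ S, IsWH ω e Q (G i)) : IsWH ω e Q (∑ i ∈ S, G i) := by
  classical
  induction S using Finset.induction_on with
  | empty => simpa using (isWH_zero (ω := ω) (e := e) (Q := Q))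
  | insert a S' hni ih =>
      rw [Finset.sum_insert hni]
      exact isWH_add (h a (Finset.mem_insert_self a S'))
        (ih fun i hi => h i (Finset.mem_insert_of_mem hi))

lemma homog_mem_of_ev_one {N : Submodule (At K n) (Fin r → At K n)}
    (hgr : ∀ x ∈ N, ∀ q, wcomp ω e q x ∈ N)
    (hsat : ∀ (c : ℕ) (x : Fin r → At K n), (Polynomial.X ^ c : At K n) • x ∈ N → x ∈ N)
    {g : Fin r → At K n} (hg : g ∈ N) :
    homogenize ω e (ev (1 : K) g) ∈ N := by
  set B : ℕ := (Finset.univ.sup fun v => (Polynomial.X ^ (e v) * Phi ω (g v)).natDegree) + 1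
    with hB
  have hBlt : ∀ v, (Polynomial.X ^ (e v) * Phi ω (g v)).natDegree < B := by
    intro v
    refine lt_of_le_of_lt (Finset.le_sup (f := fun v =>
      (Polynomial.X ^ (e v) * Phi ω (g v)).natDegree) (Finset.mem_univ v)) ?_
    rw [hB]
    exact Nat.lt_succ_self _
  set g' : Fin r → At K n :=
    ∑ q ∈ Finset.range B, (Polynomial.X ^ (B - q) : At K n) • wcomp ω e q g with hg'
  have hg'N : g' ∈ N :=
    Submodule.sum_mem _ fun q _ => Submodule.smul_mem _ _ (hgr g hg q)
  have hWH : IsWH ω e B g' := by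
    refine isWH_sum _ _ fun q hq => ?_
    have hqB : q < B := Finset.mem_range.mp hq
    have := isWH_tpow (wcomp_isWH (ω := ω) (e := e) q g) (B - q)
    rwa [show q + (B - q) = B by omega] at this
  have hev : ev (1 : K) g' = ev (1 : K) g := by
    rw [hg', ev_sum]
    calc ∑ q ∈ Finset.range B, ev (1:K) ((Polynomial.X ^ (B - q) : At K n) • wcomp ω e q g)
        = ∑ q ∈ Finset.range B, ev (1:K) (wcomp ω e q g) := by
          refine Finset.sum_congr rfl fun q _ => ev_one_tpow _ _
      _ = ev (1:K) (∑ q ∈ Finset.range B, wcomp ω e q g) := (ev_sum _ _ _).symm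
      _ = ev (1:K) g := by rw [wcomp_decomp hBlt]
  have hdet := isWH_eq_homogenize hWH
  rw [hev] at hdet
  refine hsat (B - maxWt ω e (ev (1:K) g)) _ ?_
  rw [← hdet]
  exact hg'N


section MT
variable {ω : Fin n → ℕ} {ε : Fin k → ℕ} {M : Submodule (A K n) (Fin k → A K n)}

lemma wcomp_mem_Mtilde {x : Fin k → At K n} (hx : x ∈ Mtilde ω ε M) (q : ℕ) :
    wcomp ω ε q x ∈ Mtilde ω ε M :=
  wcomp_mem_span
    (fun y hy => by obtain ⟨f, _, rfl⟩ := hy; exact ⟨maxWt ω ε f, homogenize_isWH f⟩) hx q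

lemma ev_one_Mtilde {x : Fin k → At K n} (hx : x ∈ Mtilde ω ε M) : ev (1 : K) x ∈ M := by
  refine Submodule.span_induction ?_ ?_ ?_ ?_ hx
  · rintro y ⟨f, hf, rfl⟩; rw [ev_one_homogenize]; exact hf
  · rw [ev_zero_elt]; exact M.zero_mem
  · intro y z _ _ hy hz; rw [ev_add]; exact M.add_mem hy hz
  · intro a y _ hy; rw [ev_smul]; exact M.smul_mem _ hy

lemma isWH_mem_Mtilde {Q : ℕ} {x : Fin k → At K n} (hWH : IsWH ω ε Q x)
    (h1 : ev (1 : K) x ∈ M) : x ∈ Mtilde ω ε M := by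
  rw [isWH_eq_homogenize hWH]
  exact Submodule.smul_mem _ _ (Submodule.subset_span ⟨ev (1 : K) x, h1, rfl⟩)

lemma Mtilde_sat {c : ℕ} {x : Fin k → At K n}
    (h : (Polynomial.X ^ c : At K n) • x ∈ Mtilde ω ε M) : x ∈ Mtilde ω ε M := by
  set B : ℕ := (Finset.univ.sup fun v => (Polynomial.X ^ (ε v) * Phi ω (x v)).natDegree) + 1
    with hB
  have hBlt : ∀ v, (Polynomial.X ^ (ε v) * Phi ω (x v)).natDegree < B := by
    intro v
    refine lt_of_le_of_lt (Finset.le_sup (f := fun v =>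
      (Polynomial.X ^ (ε v) * Phi ω (x v)).natDegree) (Finset.mem_univ v)) ?_
    rw [hB]
    exact Nat.lt_succ_self _
  rw [← wcomp_decomp hBlt]
  refine Submodule.sum_mem _ fun q _ => ?_
  have h1 : (Polynomial.X ^ c : At K n) • wcomp ω ε q x ∈ Mtilde ω ε M := by
    rw [← wcomp_tpow]
    exact wcomp_mem_Mtilde h (q + c)
  have h2 : ev (1 : K) (wcomp ω ε q x) ∈ M := by
    rw [← ev_one_tpow c]
    exact ev_one_Mtilde h1
  exact isWH_mem_Mtilde (wcomp_isWH q x) h2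

end MT

end Auxiliary

/-- **Remark 2.2.**  Along a minimal bigraded free resolution of
`F̃/M̃`, in each homological degree `i` the image `B̃_{t=0}` of the differential
in the specialization `t = 0` is the initial module, with respect to the weight
`(ω, ε(i))`, of the image `B̃_{t=1}` in the specialization `t = 1`:
`in_{(ω,ε(i))}(B̃_{t=1}) = B̃_{t=0}`. -/
theorem initial_module_of_syzygies
    (ω : Fin n → ℕ) (d ε : Fin k → ℕ)
    (M : Submodule (A K n) (Fin k → A K n)) (hM : IsGradedSub d M)
    (res : BigradedRes ω d ε (Mtilde ω ε M)) (i : ℕ) :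
    inMod ω (res.edeg i) (evalSub 1 (LinearMap.range (res.diff i)))
      = evalSub 0 (LinearMap.range (res.diff i)) := by
  classical
  have hgenWH : ∀ l, IsWH ω (res.edeg i) (res.edeg (i+1) l) (res.diff i (Pi.single l 1)) := by
    intro l
    refine isWH_of_coeff fun v s u hc => ?_
    have hs : s ∈ (res.diff i (Pi.single l 1) v).support :=
      Polynomial.mem_support_iff.mpr (fun hh => hc (by rw [hh, MvPolynomial.coeff_zero]))
    have hu : u ∈ ((res.diff i (Pi.single l 1) v).coeff s).support :=
      MvPolynomial.mem_support_iff.mpr hc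
    exact (res.diff_hom i l v s hs u hu).2
  have hgr : ∀ x ∈ LinearMap.range (res.diff i), ∀ q,
      wcomp ω (res.edeg i) q x ∈ LinearMap.range (res.diff i) := by
    intro x hx q
    rw [range_eq_span] at hx ⊢
    exact wcomp_mem_span (by rintro y ⟨l, rfl⟩; exact ⟨_, hgenWH l⟩) hx q
  have hsat : ∀ (c : ℕ) (x : Fin (res.rk i) → At K n),
      (Polynomial.X ^ c : At K n) • x ∈ LinearMap.range (res.diff i) →
        x ∈ LinearMap.range (res.diff i) := by
    cases i with
    | zero =>
      intro c x hcx
      rw [res.ex0, Submodule.mem_comap, LinearMap.map_smul] at hcx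
      rw [res.ex0, Submodule.mem_comap]
      exact Mtilde_sat hcx
    | succ j =>
      intro c x hcx
      rw [res.exs j, LinearMap.mem_ker, LinearMap.map_smul] at hcx
      rw [res.exs j, LinearMap.mem_ker]
      funext v
      have hv : (Polynomial.X ^ c : At K n) * res.diff j x v = 0 := by
        have := congrFun hcx v
        rwa [Pi.smul_apply, smul_eq_mul] at this
      rcases mul_eq_zero.mp hv with h | h
      · exact absurd h (pow_ne_zero _ Polynomial.X_ne_zero)
      · exact h
  apply le_antisymm
  · refine Submodule.span_le.mpr ?_
    rintro y ⟨f, hfmem, hf0, rfl⟩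
    obtain ⟨g, hg, hev⟩ := mem_evalSub.mp hfmem
    have hhom : homogenize ω (res.edeg i) f ∈ LinearMap.range (res.diff i) := by
      rw [← hev]
      exact homog_mem_of_ev_one hgr hsat hg
    rw [← ev_zero_homogenize f]
    exact ev_mem_evalSub hhom
  · refine Submodule.span_le.mpr ?_
    rintro y ⟨g, hg, rfl⟩
    show ev (0 : K) g ∈ inMod ω (res.edeg i) (evalSub 1 (LinearMap.range (res.diff i)))
    set B : ℕ :=
      (Finset.univ.sup fun v => (Polynomial.X ^ (res.edeg i v) * Phi ω (g v)).natDegree) + 1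
      with hB
    have hBlt : ∀ v, (Polynomial.X ^ (res.edeg i v) * Phi ω (g v)).natDegree < B := by
      intro v
      refine lt_of_le_of_lt (Finset.le_sup (f := fun v =>
        (Polynomial.X ^ (res.edeg i v) * Phi ω (g v)).natDegree) (Finset.mem_univ v)) ?_
      rw [hB]
      exact Nat.lt_succ_self _
    rw [← wcomp_decomp hBlt, ev_sum]
    refine Submodule.sum_mem _ fun q _ => ?_
    have hyN : wcomp ω (res.edeg i) q g ∈ LinearMap.range (res.diff i) := hgr g hg q
    have hyWH := wcomp_isWH (ω := ω) (e := res.edeg i) q g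
    by_cases hy0 : wcomp ω (res.edeg i) q g = 0
    · rw [hy0, ev_zero_elt]
      exact Submodule.zero_mem _
    · have hf0 : ev (1 : K) (wcomp ω (res.edeg i) q g) ≠ 0 :=
        fun hh => hy0 (isWH_eval_zero hyWH hh)
      have hfE1 : ev (1 : K) (wcomp ω (res.edeg i) q g)
          ∈ evalSub 1 (LinearMap.range (res.diff i)) := ev_mem_evalSub hyN
      have hdet := isWH_eq_homogenize hyWH
      by_cases hqW : q - maxWt ω (res.edeg i) (ev (1 : K) (wcomp ω (res.edeg i) q g)) = 0
      · have hval : ev (0 : K) (wcomp ω (res.edeg i) q g)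
            = inForm ω (res.edeg i) (ev (1 : K) (wcomp ω (res.edeg i) q g)) := by
          rw [hdet, hqW, pow_zero, one_smul, ev_zero_homogenize, ev_one_homogenize]
        rw [hval]
        exact Submodule.subset_span ⟨_, hfE1, hf0, rfl⟩
      · rw [hdet, ev_zero_tpow (Nat.pos_of_ne_zero hqW)]
        exact Submodule.zero_mem _

end CregPaper
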